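/- Let x ∈ I have continued fraction coefficients (a_j)_{j≥1}, let n ≥ 1 and let y ∈ I_n(x) \ I_{n+1}(x). Then there exists j_0 ∈ {n+2, n+3} such that |x − y| ≥ 1 / ( 2 (a_{j_0}+2)² ∏_{1 ≤ j ≤ n+3, j ≠ j_0} (a_j+1)² ). -/

import Mathlib

open Filter Finset MeasureTheory

/-- `qden a n` is the denominator `q_n` of the continued fraction with partial
quotients `a_1 = a 0, a_2 = a 1, …` (0-indexed sequence `a`), defined by
`q_0 = 1`, `q_1 = a_1`, `q_n = a_n q_{n-1} + q_{n-2}`. -/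
def qden (a : ℕ → ℕ+) : ℕ → ℕ
  | 0 => 1
  | 1 => a 0
  | (n+2) => (a (n+1) : ℕ) * qden a (n+1) + qden a n

/-- `pnum a n` is the numerator `p_n`, defined by `p_0 = 0`, `p_1 = 1`,
`p_n = a_n p_{n-1} + p_{n-2}`. -/
def pnum (a : ℕ → ℕ+) : ℕ → ℕ
  | 0 => 0
  | 1 => 1
  | (n+2) => (a (n+1) : ℕ) * pnum a (n+1) + pnum a n

/-- The value `[a_1, a_2, …]` of the infinite continued fraction with partial quotients
`a_1 = a 0, a_2 = a 1, …`, i.e. the limit of the convergents `p_n / q_n` (which always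
exists). -/
noncomputable def cfVal (a : ℕ → ℕ+) : ℝ :=
  limUnder atTop (fun n => (pnum a n : ℝ) / (qden a n : ℝ))

/-- The set `I` of irrational numbers of `[0,1]`. -/
def Iirr : Set ℝ := {x | x ∈ Set.Icc (0:ℝ) 1 ∧ Irrational x}

/-- The fundamental interval `I_n(x)` of rank `n` for `x = [a_1, a_2, …]`: the set of those
irrationals `y = [b_1, b_2, …]` whose first `n` partial quotients agree with those of `x`. -/
def fundInt (a : ℕ → ℕ+) (n : ℕ) : Set ℝ :=
  {y | ∃ b : ℕ → ℕ+, cfVal b = y ∧ ∀ j < n, b j = a j}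

/-!
Write `x = [a_1, a_2, …]`, `y = [b_1, b_2, …]` with `b_j = a_j` for `j ≤ n` and
`b_{n+1} ≠ a_{n+1}`, and let `p_k / q_k` be the convergents of `x`. They are the partial sums of
the alternating series `∑ (-1)^k / (q_k q_{k+1})`, so `x` lies between any two consecutive ones.
The map `f(t) = [a_1, …, a_n, t] = (t p_n + p_{n-1}) / (t q_n + q_{n-1})` is monotone on `t > 0`
(with direction given by the parity of `n`); `f(a_{n+1}) = p_{n+1}/q_{n+1}`, and
`p_{n+2}/q_{n+2} = f(a_{n+1} + 1/a_{n+2})` lies between `x` and `f(a_{n+1} + 1)`; the same holds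
for `y` with the `b_j`. Hence if `b_{n+1} < a_{n+1}` the convergent `p_{n+1}/q_{n+1}` lies between
`x` and `y`, and if `b_{n+1} > a_{n+1}` so does `p_{n+2}/q_{n+2}`. Finally
`|x - p_k/q_k| ≥ |p_{k+2}/q_{k+2} - p_k/q_k| = a_{k+2} / (q_k q_{k+2})`, which is at least
`1 / (2 (a_{k+1} + 1) q_k²)`, and `q_k ≤ ∏_{j ≤ k} (a_j + 1)`.
-/

open Topology

section Convergents

variable (a : ℕ → ℕ+)

lemma qden_pos : ∀ k, 0 < qden a k
  | 0 => Nat.one_pos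
  | 1 => (a 0).pos
  | k + 2 => Nat.add_pos_left (Nat.mul_pos (a (k + 1)).pos (qden_pos (k + 1))) _

lemma qden_le_qden_succ : ∀ k, qden a k ≤ qden a (k + 1)
  | 0 => (a 0).pos
  | k + 1 => Nat.le_add_right_of_le (Nat.le_mul_of_pos_left _ (a (k + 1)).pos)

lemma qden_succ_le (k : ℕ) : qden a (k + 1) ≤ (a k + 1) * qden a k := by
  cases k with
  | zero => simp [qden]
  | succ k =>
    have := qden_le_qden_succ a k
    simp only [qden]
    nlinarith

lemma le_qden_mul_qden_succ : ∀ k, k ≤ qden a k * qden a (k + 1)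
  | 0 => Nat.zero_le _
  | k + 1 => by
    have ih := le_qden_mul_qden_succ k
    have h1 := qden_pos a (k + 1)
    have h2 : qden a k + qden a (k + 1) ≤ qden a (k + 2) := by
      have : 1 ≤ (a (k + 1) : ℕ) := (a (k + 1)).pos
      simp only [qden]; nlinarith
    nlinarith

lemma pnum_mul_qden_sub_pnum_mul_qden (k : ℕ) :
    (pnum a (k + 1) : ℝ) * qden a k - pnum a k * qden a (k + 1) = (-1) ^ k := by
  induction k with
  | zero => simp [pnum, qden]
  | succ k ih =>
    push_cast [pnum, qden]
    linear_combination -ih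

noncomputable def cfConv (k : ℕ) : ℝ := pnum a k / qden a k

lemma cfConv_succ_sub (k : ℕ) :
    cfConv a (k + 1) - cfConv a k = (-1) ^ k * ((qden a k : ℝ) * qden a (k + 1))⁻¹ := by
  have := qden_pos a k
  have := qden_pos a (k + 1)
  rw [cfConv, cfConv, ← pnum_mul_qden_sub_pnum_mul_qden]
  field_simp

lemma cfConv_eq_sum (k : ℕ) :
    cfConv a k = ∑ i ∈ range k, (-1) ^ i * ((qden a i : ℝ) * qden a (i + 1))⁻¹ := by
  induction k with
  | zero => simp [cfConv, pnum]
  | succ k ih => rw [sum_range_succ, ← ih, ← cfConv_succ_sub]; ring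

lemma antitone_inv_qden_mul_qden_succ :
    Antitone fun i ↦ ((qden a i : ℝ) * qden a (i + 1))⁻¹ :=
  antitone_nat_of_succ_le fun i ↦
    inv_anti₀ (by have := qden_pos a i; have := qden_pos a (i + 1); positivity)
      (by exact_mod_cast Nat.mul_le_mul (qden_le_qden_succ a i) (qden_le_qden_succ a (i + 1)))

lemma tendsto_inv_qden_mul_qden_succ :
    Tendsto (fun i ↦ ((qden a i : ℝ) * qden a (i + 1))⁻¹) atTop (𝓝 0) := by
  have h := (tendsto_natCast_atTop_atTop (R := ℝ)).comp
    (tendsto_atTop_mono (le_qden_mul_qden_succ a) tendsto_id)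
  simpa only [Function.comp_def, Nat.cast_mul, Pi.inv_def] using h.inv_tendsto_atTop

lemma tendsto_sum_cfVal :
    Tendsto (fun k ↦ ∑ i ∈ range k, (-1) ^ i * ((qden a i : ℝ) * qden a (i + 1))⁻¹) atTop
      (𝓝 (cfVal a)) := by
  obtain ⟨l, hl⟩ :=
    (antitone_inv_qden_mul_qden_succ a).tendsto_alternating_series_of_tendsto_zero
      (tendsto_inv_qden_mul_qden_succ a)
  have hconv : Tendsto (cfConv a) atTop (𝓝 l) := by simpa only [← cfConv_eq_sum] using hl
  rwa [show cfVal a = l from hconv.limUnder_eq]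

lemma neg_one_pow_mul_cfConv_le (k : ℕ) : (-1) ^ k * cfConv a k ≤ (-1) ^ k * cfVal a := by
  obtain ⟨j, rfl | rfl⟩ := Nat.even_or_odd' k
  · simpa [pow_mul, cfConv_eq_sum] using
      (antitone_inv_qden_mul_qden_succ a).alternating_series_le_tendsto (tendsto_sum_cfVal a) j
  · simpa [pow_succ, pow_mul, cfConv_eq_sum] using
      (antitone_inv_qden_mul_qden_succ a).tendsto_le_alternating_series (tendsto_sum_cfVal a) j

lemma neg_one_pow_mul_cfVal_le (k : ℕ) : (-1) ^ k * cfVal a ≤ (-1) ^ k * cfConv a (k + 1) := by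
  have := neg_one_pow_mul_cfConv_le a (k + 1)
  rw [pow_succ] at this
  linarith

end Convergents

section LowerBound

variable (a : ℕ → ℕ+)

lemma qden_le_prod (k : ℕ) : qden a k ≤ ∏ j ∈ range k, ((a j : ℕ) + 1) := by
  induction k with
  | zero => simp [qden]
  | succ k ih =>
    rw [prod_range_succ, mul_comm]
    exact (qden_succ_le a k).trans (Nat.mul_le_mul_left _ ih)

lemma cfConv_add_two_sub (k : ℕ) :
    cfConv a (k + 2) - cfConv a k = (-1) ^ k * (a (k + 1) / (qden a k * qden a (k + 2))) := by
  have := qden_pos a k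
  have := qden_pos a (k + 1)
  have := qden_pos a (k + 2)
  have hq : (qden a (k + 2) : ℝ) = a (k + 1) * qden a (k + 1) + qden a k := by
    push_cast [qden]; ring
  rw [show cfConv a (k + 2) - cfConv a k
      = (cfConv a (k + 1 + 1) - cfConv a (k + 1)) + (cfConv a (k + 1) - cfConv a k) by ring,
    cfConv_succ_sub, cfConv_succ_sub]
  field_simp
  rw [hq]
  ring

lemma one_div_le_abs_cfVal_sub_cfConv (k : ℕ) :
    1 / (2 * ((a k : ℝ) + 1) * qden a k ^ 2) ≤ |cfVal a - cfConv a k| := by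
  set s : ℝ := (-1) ^ k
  have hs : s * s = 1 := by rw [← pow_add, ← two_mul, pow_mul]; norm_num
  have hfar : s * (cfConv a (k + 2) - cfConv a k) ≤ s * (cfVal a - cfConv a k) := by
    have := neg_one_pow_mul_cfConv_le a (k + 2)
    rw [show (-1 : ℝ) ^ (k + 2) = s by ring] at this
    linarith
  have hq0 : (0 : ℝ) < qden a k := by exact_mod_cast qden_pos a k
  have hq2 : (qden a (k + 2) : ℝ) ≤ (a (k + 1) + 1) * ((a k + 1) * qden a k) := by
    exact_mod_cast (qden_succ_le a (k + 1)).trans (Nat.mul_le_mul_left _ (qden_succ_le a k))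
  have ha1 : (1 : ℝ) ≤ a (k + 1) := by exact_mod_cast (a (k + 1)).pos
  have hq2pos : (0 : ℝ) < qden a (k + 2) := by exact_mod_cast qden_pos a (k + 2)
  calc 1 / (2 * ((a k : ℝ) + 1) * qden a k ^ 2)
      ≤ a (k + 1) / (qden a k * qden a (k + 2)) := by
        rw [div_le_div_iff₀ (by positivity) (by positivity)]
        have h2 : ((a (k + 1) : ℝ) + 1) * ((a k + 1) * qden a k ^ 2)
            ≤ (2 * a (k + 1)) * ((a k + 1) * qden a k ^ 2) :=
          mul_le_mul_of_nonneg_right (by linarith) (by positivity)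
        nlinarith [mul_le_mul_of_nonneg_left hq2 hq0.le]
    _ = s * (cfConv a (k + 2) - cfConv a k) := by
        rw [cfConv_add_two_sub, ← mul_assoc, hs, one_mul]
    _ ≤ s * (cfVal a - cfConv a k) := hfar
    _ ≤ |s * (cfVal a - cfConv a k)| := le_abs_self _
    _ = |cfVal a - cfConv a k| := by simp [s, abs_mul]

lemma one_div_le_abs_cfVal_sub_cfConv_of_subset {k : ℕ} {s : Finset ℕ} (hs : range k ⊆ s) :
    1 / (2 * ((a k : ℝ) + 2) ^ 2 * ∏ j ∈ s, ((a j : ℝ) + 1) ^ 2) ≤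
      |cfVal a - cfConv a k| := by
  refine le_trans (one_div_le_one_div_of_le ?_ ?_) (one_div_le_abs_cfVal_sub_cfConv a k)
  · have := qden_pos a k
    positivity
  have hq : (qden a k : ℝ) ≤ ∏ j ∈ s, ((a j : ℝ) + 1) := by
    exact_mod_cast (qden_le_prod a k).trans
      (prod_le_prod_of_subset_of_one_le' hs fun j _ _ ↦ Nat.le_add_left 1 _)
  rw [prod_pow]
  gcongr
  nlinarith

end LowerBound

section Mobius

lemma pnum_congr {a b : ℕ → ℕ+} : ∀ {k}, (∀ j < k, b j = a j) → pnum b k = pnum a k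
  | 0, _ => rfl
  | 1, _ => rfl
  | k + 2, h => by
    have h₁ : pnum b (k + 1) = pnum a (k + 1) := pnum_congr fun j hj ↦ h j (by omega)
    have h₀ : pnum b k = pnum a k := pnum_congr fun j hj ↦ h j (by omega)
    simp only [pnum, h (k + 1) (by omega), h₁, h₀]

lemma qden_congr {a b : ℕ → ℕ+} : ∀ {k}, (∀ j < k, b j = a j) → qden b k = qden a k
  | 0, _ => rfl
  | 1, h => by simp only [qden, h 0 (by omega)]
  | k + 2, h => by
    have h₁ : qden b (k + 1) = qden a (k + 1) := qden_congr fun j hj ↦ h j (by omega)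
    have h₀ : qden b k = qden a k := qden_congr fun j hj ↦ h j (by omega)
    simp only [qden, h (k + 1) (by omega), h₁, h₀]

variable (a : ℕ → ℕ+)

/-- `cfMobius a m t` is the value of `[a 0, …, a m, t]`. -/
noncomputable def cfMobius (m : ℕ) (t : ℝ) : ℝ :=
  (t * pnum a (m + 1) + pnum a m) / (t * qden a (m + 1) + qden a m)

lemma cfMobius_congr {a b : ℕ → ℕ+} {m : ℕ} (h : ∀ j ≤ m, b j = a j) :
    cfMobius b m = cfMobius a m := by
  have h' : ∀ {k}, k ≤ m + 1 → ∀ j < k, b j = a j := fun hk j hj ↦ h j (by omega)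
  funext t
  simp only [cfMobius, pnum_congr (h' le_rfl), qden_congr (h' le_rfl),
    pnum_congr (h' m.le_succ), qden_congr (h' m.le_succ)]

lemma monotoneOn_neg_one_pow_mul_cfMobius (m : ℕ) :
    MonotoneOn (fun t ↦ (-1) ^ m * cfMobius a m t) (Set.Ioi 0) := by
  intro r hr t ht hrt
  have := qden_pos a m
  have := qden_pos a (m + 1)
  have hr' : (0 : ℝ) < r * qden a (m + 1) + qden a m := by
    simp only [Set.mem_Ioi] at hr; positivity
  have ht' : (0 : ℝ) < t * qden a (m + 1) + qden a m := by
    simp only [Set.mem_Ioi] at ht; positivity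
  have hdiff : (-1) ^ m * cfMobius a m t - (-1) ^ m * cfMobius a m r
      = (t - r) / ((t * qden a (m + 1) + qden a m) * (r * qden a (m + 1) + qden a m)) := by
    have hdet := pnum_mul_qden_sub_pnum_mul_qden a m
    have hs : ((-1 : ℝ) ^ m) ^ 2 = 1 := by rw [← pow_mul, mul_comm, pow_mul]; norm_num
    rw [cfMobius, cfMobius, ← mul_sub, div_sub_div _ _ ht'.ne' hr'.ne']
    field_simp
    linear_combination (-1) ^ m * (t - r) * hdet + (t - r) * hs
  simp only
  linarith [div_nonneg (sub_nonneg.mpr hrt) (mul_pos ht' hr').le]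

lemma cfConv_add_two_eq (m : ℕ) : cfConv a (m + 2) = cfMobius a m (a (m + 1)) := by
  rw [cfConv, cfMobius]
  push_cast [pnum, qden]
  ring_nf

lemma cfConv_add_three_eq (m : ℕ) :
    cfConv a (m + 3) = cfMobius a m (a (m + 1) + (a (m + 2) : ℝ)⁻¹) := by
  have : (0 : ℝ) < a (m + 2) := by exact_mod_cast (a (m + 2)).pos
  rw [cfConv, cfMobius]
  push_cast [pnum, qden]
  field_simp
  ring

lemma neg_one_pow_mul_cfConv_add_three_le (m : ℕ) :
    (-1) ^ m * cfConv a (m + 3) ≤ (-1) ^ m * cfMobius a m (a (m + 1) + 1) := by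
  have ha2 : (1 : ℝ) ≤ a (m + 2) := by exact_mod_cast (a (m + 2)).pos
  rw [cfConv_add_three_eq]
  refine monotoneOn_neg_one_pow_mul_cfMobius a m (Set.mem_Ioi.mpr ?_) (Set.mem_Ioi.mpr ?_) ?_
  · positivity
  · positivity
  · gcongr
    exact inv_le_one_of_one_le₀ ha2

end Mobius

lemma abs_sub_le_abs_sub_of_mul_le {s x y z : ℝ} (hs : |s| = 1) (hyz : s * y ≤ s * z)
    (hzx : s * z ≤ s * x) : |x - z| ≤ |x - y| :=
  calc |x - z| = s * (x - z) := by
        rw [← one_mul |x - z|, ← hs, ← abs_mul, abs_of_nonneg]; linarith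
    _ ≤ s * (x - y) := by linarith
    _ ≤ |x - y| := by simpa [abs_mul, hs] using le_abs_self (s * (x - y))

section Separation

variable {a b : ℕ → ℕ+} {m : ℕ}

lemma abs_cfVal_sub_cfConv_le_of_lt (hab : ∀ j ≤ m, b j = a j) (hlt : b (m + 1) < a (m + 1)) :
    |cfVal a - cfConv a (m + 2)| ≤ |cfVal a - cfVal b| := by
  have hsign : (-1 : ℝ) ^ (m + 2) = (-1) ^ m := by ring
  have hy : (-1) ^ m * cfVal b ≤ (-1) ^ m * cfMobius a m (b (m + 1) + 1) := by
    rw [← cfMobius_congr hab, ← hsign]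
    exact (neg_one_pow_mul_cfVal_le b (m + 2)).trans
      (hsign ▸ neg_one_pow_mul_cfConv_add_three_le b m)
  have hmid : (-1) ^ m * cfMobius a m (b (m + 1) + 1) ≤ (-1) ^ m * cfConv a (m + 2) := by
    have hle : (b (m + 1) : ℕ) + 1 ≤ a (m + 1) := hlt
    rw [cfConv_add_two_eq]
    exact monotoneOn_neg_one_pow_mul_cfMobius a m (Set.mem_Ioi.mpr (by positivity))
      (Set.mem_Ioi.mpr (by positivity)) (by exact_mod_cast hle)
  have hx : (-1) ^ m * cfConv a (m + 2) ≤ (-1) ^ m * cfVal a :=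
    hsign ▸ neg_one_pow_mul_cfConv_le a (m + 2)
  exact abs_sub_le_abs_sub_of_mul_le (by simp) (hy.trans hmid) hx

lemma abs_cfVal_sub_cfConv_le_of_gt (hab : ∀ j ≤ m, b j = a j) (hgt : a (m + 1) < b (m + 1)) :
    |cfVal a - cfConv a (m + 3)| ≤ |cfVal a - cfVal b| := by
  have hsign : (-1 : ℝ) ^ (m + 2) = (-1) ^ m := by ring
  have hx : (-1) ^ m * cfVal a ≤ (-1) ^ m * cfConv a (m + 3) :=
    hsign ▸ neg_one_pow_mul_cfVal_le a (m + 2)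
  have hmid :
      (-1) ^ m * cfMobius a m (a (m + 1) + 1) ≤ (-1) ^ m * cfMobius a m (b (m + 1)) := by
    have hle : (a (m + 1) : ℕ) + 1 ≤ b (m + 1) := hgt
    exact monotoneOn_neg_one_pow_mul_cfMobius a m (Set.mem_Ioi.mpr (by positivity))
      (Set.mem_Ioi.mpr (by positivity)) (by exact_mod_cast hle)
  have hy : (-1) ^ m * cfMobius a m (b (m + 1)) ≤ (-1) ^ m * cfVal b := by
    rw [← cfMobius_congr hab, ← cfConv_add_two_eq]
    exact hsign ▸ neg_one_pow_mul_cfConv_le b (m + 2)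
  have := neg_one_pow_mul_cfConv_add_three_le a m
  exact abs_sub_le_abs_sub_of_mul_le (s := -(-1) ^ m) (by simp) (by linarith) (by linarith)

end Separation

theorem abs_sub_ge_of_mem_fundInt_diff_general (a : ℕ → ℕ+) (x : ℝ)
    (hxa : cfVal a = x) (n : ℕ) (hn : 1 ≤ n) (y : ℝ)
    (hy : y ∈ fundInt a n \ fundInt a (n+1)) :
    ∃ j₀ ∈ ({n+1, n+2} : Finset ℕ),
      1 / (2 * ((a j₀ : ℝ) + 2) ^ 2 *
          ∏ j ∈ (Finset.range (n+3)).erase j₀, ((a j : ℝ) + 1) ^ 2) ≤ |x - y| := by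
  obtain ⟨⟨b, rfl, hab⟩, hy⟩ := hy
  have hne : b n ≠ a n := fun h ↦
    hy ⟨b, rfl, fun j hj ↦ (Nat.lt_succ_iff_lt_or_eq.mp hj).elim (hab j) (· ▸ h)⟩
  obtain ⟨m, rfl⟩ : ∃ m, n = m + 1 := ⟨n - 1, by omega⟩
  subst hxa
  have hab' : ∀ j ≤ m, b j = a j := fun j hj ↦ hab j (by omega)
  have hsub : ∀ k ≤ m + 3, range k ⊆ (range (m + 4)).erase k := fun k hk j hj ↦ by
    simp only [mem_range, mem_erase] at hj ⊢; omega
  rcases lt_or_gt_of_ne hne with hlt | hgt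
  · exact ⟨m + 2, by simp,
      (one_div_le_abs_cfVal_sub_cfConv_of_subset a (hsub _ (by omega))).trans
        (abs_cfVal_sub_cfConv_le_of_lt hab' hlt)⟩
  · exact ⟨m + 3, by simp,
      (one_div_le_abs_cfVal_sub_cfConv_of_subset a (hsub _ (by omega))).trans
        (abs_cfVal_sub_cfConv_le_of_gt hab' hgt)⟩

/-- If `x ∈ I` has partial quotients `a` and `y ∈ I_n(x) \\ I_{n+1}(x)` with `n ≥ 1`, then
there is `j₀ ∈ {n+2, n+3}` (1-indexed; `{n+1, n+2}` for the 0-indexed sequence `a`) with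
`|x − y| ≥ 1 / ( 2 (a_{j₀}+2)² ∏_{1 ≤ j ≤ n+3, j ≠ j₀} (a_j+1)² )`. -/
theorem abs_sub_ge_of_mem_fundInt_diff (a : ℕ → ℕ+) (x : ℝ) (hx : x ∈ Iirr)
    (hxa : cfVal a = x) (n : ℕ) (hn : 1 ≤ n) (y : ℝ)
    (hy : y ∈ fundInt a n \ fundInt a (n+1)) :
    ∃ j₀ ∈ ({n+1, n+2} : Finset ℕ),
      1 / (2 * ((a j₀ : ℝ) + 2) ^ 2 *
          ∏ j ∈ (Finset.range (n+3)).erase j₀, ((a j : ℝ) + 1) ^ 2) ≤ |x - y| :=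
  abs_sub_ge_of_mem_fundInt_diff_general a x hxa n hn y hy
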